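/- Let E₁,…,E_m, F be Banach spaces, suppose F has cotype r (2 ≤ r < ∞), let 1 ≤ s < 2 with m < s/(r(s−1)) (this condition is vacuous for s = 1), and let t ≥ sr/(s − msr + mr). Then every continuous m-linear operator T : E₁×⋯×E_m → F is multiple (t,s)-summing, i.e., there is a constant C ≥ 0 (depending on T) such that (Σ_{k₁,…,k_m=1}^n ‖T(x_{k₁}^{(1)},…,x_{k_m}^{(m)})‖^t)^{1/t} ≤ C ∏_{i=1}^m ‖(x_k^{(i)})_{k=1}^n‖_{w,s} for all positive integers n and all vectors x_k^{(i)} ∈ E_i. -/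

import Mathlib

open Finset

/-- The weak `q`-norm `‖(x_k)_{k=1}^n‖_{w,q} = sup_{φ ∈ B_{E*}} (∑ |φ(x_k)|^q)^{1/q}`. -/
noncomputable def weakNorm (𝕜 : Type*) [RCLike 𝕜] {E : Type*} [NormedAddCommGroup E]
    [NormedSpace 𝕜 E] {n : ℕ} (x : Fin n → E) (q : ℝ) : ℝ :=
  sSup {r : ℝ | ∃ φ : E →L[𝕜] 𝕜, ‖φ‖ ≤ 1 ∧ r = (∑ k, ‖φ (x k)‖ ^ q) ^ (1 / q)}

/-- A Banach space `F` has cotype `r` if there is `K ≥ 0` such that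
`(∑ ‖x_k‖^r)^{1/r} ≤ K (∫₀¹ ‖∑ r_k(t) x_k‖² dt)^{1/2}`, where
`r_k(t) = sign (sin (2^k π t))` is the `k`-th Rademacher function. -/
def HasCotype (F : Type*) [NormedAddCommGroup F] [NormedSpace ℝ F] (r : ℝ) : Prop :=
  ∃ K : ℝ, 0 ≤ K ∧ ∀ (n : ℕ) (x : Fin n → F),
    (∑ k, ‖x k‖ ^ r) ^ (1 / r) ≤
      K * (∫ u in (0:ℝ)..1,
            ‖∑ k : Fin n, Real.sign (Real.sin (2 ^ (k.1 + 1) * Real.pi * u)) • x k‖ ^ (2 : ℝ))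
          ^ ((1 : ℝ) / 2)

/-!
Cotype `r` makes every `m`-linear `T` multiple `(r, 1)`-summing with constant `K ^ m ‖T‖`, by
induction on `m`: for fixed later indices, cotype bounds `∑ⱼ ‖T (x_j, …)‖ ^ r` by the `Lʳ`-average
over `u` of `‖T (∑ⱼ r_j(u) x_j, …)‖ ^ r`, and `∑ⱼ r_j(u) x_j` has norm at most `‖x‖_{w,1}`.

The `(t₀, s)`-estimate, `1/t₀ = 1/r - m/s*`, follows by applying the `(r, 1)`-estimate to the
rescaled vectors `y_j^{(i)} = (M_i(j)/S)^{1/s*} x_j^{(i)}`, where `M_i` are the marginals of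
`b_k = ‖T (x_k)‖ ^ t₀` and `S = ∑ b_k`: by Hölder the weak `1`-norms of the `y^{(i)}` are at most
the weak `s`-norms of the `x^{(i)}`, while `b_k ≤ M_i(k_i)` gives `S ^ (r/t₀) ≤ ∑ ‖T (y_k)‖ ^ r`.
Larger `t` follow from the monotonicity of `ℓᵗ`-norms in `t`.
-/

open MeasureTheory

lemma Fintype.sum_pi_fin_succ_comp {m n : ℕ} {E : Fin (m + 1) → Type*} {M : Type*}
    [AddCommMonoid M] (g : (∀ i, E i) → M) (x : ∀ i, Fin n → E i) :
    ∑ k : Fin (m + 1) → Fin n, g (fun i => x i (k i))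
      = ∑ k' : Fin m → Fin n, ∑ j, g (Fin.cons (x 0 j) fun i => x i.succ (k' i)) := by
  rw [← ((Fin.consEquiv fun _ => Fin n).sum_comp _), Fintype.sum_prod_type, Finset.sum_comm]
  refine Finset.sum_congr rfl fun k' _ => Finset.sum_congr rfl fun j _ => congrArg g ?_
  funext i
  cases i using Fin.cases <;> rfl

lemma sum_rpow_one_div_le_of_exponent_le {ι : Type*} [Fintype ι] {a : ι → ℝ} (ha : ∀ k, 0 ≤ a k)
    {p q : ℝ} (hp : 0 < p) (hpq : p ≤ q) :
    (∑ k, a k ^ q) ^ (1 / q) ≤ (∑ k, a k ^ p) ^ (1 / p) := by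
  have hq : 0 < q := hp.trans_le hpq
  have hsum_p : 0 ≤ ∑ k, a k ^ p := Finset.sum_nonneg fun k _ => Real.rpow_nonneg (ha k) _
  set S := (∑ k, a k ^ p) ^ (1 / p) with hS_def
  have hS : 0 ≤ S := Real.rpow_nonneg hsum_p _
  have ha_le : ∀ k, a k ≤ S := fun k => by
    calc a k = (a k ^ p) ^ (1 / p) := by rw [← Real.rpow_mul (ha k), mul_one_div_cancel hp.ne',
          Real.rpow_one]
      _ ≤ S := Real.rpow_le_rpow (Real.rpow_nonneg (ha k) _)
          (Finset.single_le_sum (fun j _ => Real.rpow_nonneg (ha j) _) (Finset.mem_univ k))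
          (one_div_nonneg.2 hp.le)
  have hsum : ∑ k, a k ^ q ≤ S ^ q := by
    have hsplit : ∀ b : ℝ, 0 ≤ b → b ^ q = b ^ p * b ^ (q - p) := fun b hb => by
      rw [← Real.rpow_add' hb (by linarith), add_sub_cancel]
    calc ∑ k, a k ^ q = ∑ k, a k ^ p * a k ^ (q - p) := by simp only [hsplit _ (ha _)]
      _ ≤ ∑ k, a k ^ p * S ^ (q - p) := by
        gcongr with k
        · exact Real.rpow_nonneg (ha k) _
        · exact ha k
        · exact ha_le k
      _ = S ^ q := by
        rw [← Finset.sum_mul, hsplit S hS, hS_def, one_div, Real.rpow_inv_rpow hsum_p hp.ne']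
  calc (∑ k, a k ^ q) ^ (1 / q) ≤ (S ^ q) ^ (1 / q) :=
        Real.rpow_le_rpow (Finset.sum_nonneg fun k _ => Real.rpow_nonneg (ha k) _) hsum
          (one_div_nonneg.2 hq.le)
    _ = S := by rw [one_div, Real.rpow_rpow_inv hS hq.ne']

lemma integral_norm_rpow_one_div_le_of_exponent_le {α E : Type*} [MeasurableSpace α] {μ : Measure α}
    [IsProbabilityMeasure μ] [NormedAddCommGroup E] {f : α → E} {p q : ℝ} (hp : 0 < p)
    (hpq : p ≤ q) (hf : MemLp f (ENNReal.ofReal q) μ) :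
    (∫ a, ‖f a‖ ^ p ∂μ) ^ (1 / p) ≤ (∫ a, ‖f a‖ ^ q ∂μ) ^ (1 / q) := by
  have hq : 0 < q := hp.trans_le hpq
  have hpq' : ENNReal.ofReal p ≤ ENNReal.ofReal q := ENNReal.ofReal_le_ofReal hpq
  have h := eLpNorm_le_eLpNorm_of_exponent_le hpq' hf.aestronglyMeasurable (μ := μ)
  rw [(hf.mono_exponent hpq').eLpNorm_eq_integral_rpow_norm (by simpa using hp) (by simp),
    hf.eLpNorm_eq_integral_rpow_norm (by simpa using hq) (by simp),
    ENNReal.toReal_ofReal hp.le, ENNReal.toReal_ofReal hq.le,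
    ENNReal.ofReal_le_ofReal_iff (by positivity)] at h
  simpa only [one_div] using h

section Marginal

variable {ι κ : Type*} [Fintype ι] [DecidableEq ι] [Fintype κ] [DecidableEq κ]

def marginal (b : (ι → κ) → ℝ) (i : ι) (j : κ) : ℝ :=
  ∑ k with k i = j, b k

lemma sum_marginal (b : (ι → κ) → ℝ) (i : ι) : ∑ j, marginal b i j = ∑ k, b k :=
  Finset.sum_fiberwise _ (fun k => k i) b

lemma le_marginal {b : (ι → κ) → ℝ} (hb : ∀ k, 0 ≤ b k) (i : ι) (k : ι → κ) :
    b k ≤ marginal b i (k i) :=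
  Finset.single_le_sum (f := b) (fun k _ => hb k) (by simp)

lemma marginal_nonneg {b : (ι → κ) → ℝ} (hb : ∀ k, 0 ≤ b k) (i : ι) (j : κ) :
    0 ≤ marginal b i j :=
  Finset.sum_nonneg (f := b) fun k _ => hb k

/-- Since `b k` is at most each of its marginals `M_i`, `b k / S ^ (|ι| e) ≤ ∏ (M_i/S)^e · b k ^ c`;
sum over `k`, using `S ^ c = S / S ^ (|ι| e)`. -/
lemma rpow_sum_le_sum_prod_marginal_rpow {b : (ι → κ) → ℝ} (hb : ∀ k, 0 ≤ b k) {e c : ℝ}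
    (he : 0 ≤ e) (hc : 0 < c) (hec : Fintype.card ι * e + c = 1) :
    (∑ k, b k) ^ c ≤ ∑ k, (∏ i, (marginal b i (k i) / ∑ k, b k) ^ e) * b k ^ c := by
  set S := ∑ k, b k
  have hS : 0 ≤ S := Finset.sum_nonneg fun k _ => hb k
  rcases hS.eq_or_lt with hS0 | hS0
  · rw [show S ^ c = 0 by rw [← hS0, Real.zero_rpow hc.ne']]
    exact Finset.sum_nonneg fun k _ => mul_nonneg
      (Finset.prod_nonneg fun i _ => Real.rpow_nonneg (div_nonneg (marginal_nonneg hb _ _) hS) _)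
      (Real.rpow_nonneg (hb k) _)
  have hterm : ∀ k, b k / S ^ (Fintype.card ι * e) = (∏ _i : ι, (b k / S) ^ e) * b k ^ c := by
    intro k
    rw [Finset.prod_const, Finset.card_univ, ← Real.rpow_mul_natCast (div_nonneg (hb k) hS),
      Real.div_rpow (hb k) hS, div_mul_eq_mul_div,
      ← Real.rpow_add' (hb k) (by rw [mul_comm, hec]; norm_num), mul_comm e, hec, Real.rpow_one]
  calc S ^ c = ∑ k, b k / S ^ (Fintype.card ι * e) := by
        rw [← Finset.sum_div, show c = 1 - Fintype.card ι * e by linarith, Real.rpow_sub hS0,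
          Real.rpow_one]
    _ ≤ ∑ k, (∏ i, (marginal b i (k i) / S) ^ e) * b k ^ c := by
        simp only [hterm]
        gcongr with k _ i
        · exact Real.rpow_nonneg (hb k) c
        · exact fun i _ => Real.rpow_nonneg (div_nonneg (hb k) hS) e
        · exact div_nonneg (hb k) hS
        · exact le_marginal hb i k

end Marginal

section WeakNorm

variable (𝕜 : Type*) [RCLike 𝕜] {E : Type*} [NormedAddCommGroup E] [NormedSpace 𝕜 E] {n : ℕ}

lemma bddAbove_weakNorm_set (x : Fin n → E) {q : ℝ} (hq : 0 < q) :
    BddAbove {r : ℝ | ∃ φ : E →L[𝕜] 𝕜, ‖φ‖ ≤ 1 ∧ r = (∑ k, ‖φ (x k)‖ ^ q) ^ (1 / q)} := by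
  refine ⟨(∑ k, ‖x k‖ ^ q) ^ (1 / q), ?_⟩
  rintro _ ⟨φ, hφ, rfl⟩
  gcongr with k
  exact φ.le_of_opNorm_le hφ _ |>.trans_eq (one_mul _)

lemma le_weakNorm (x : Fin n → E) {q : ℝ} (hq : 0 < q) {φ : E →L[𝕜] 𝕜} (hφ : ‖φ‖ ≤ 1) :
    (∑ k, ‖φ (x k)‖ ^ q) ^ (1 / q) ≤ weakNorm 𝕜 x q :=
  le_csSup (bddAbove_weakNorm_set 𝕜 x hq) ⟨φ, hφ, rfl⟩

lemma weakNorm_nonneg (x : Fin n → E) {q : ℝ} (hq : 0 < q) : 0 ≤ weakNorm 𝕜 x q := by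
  simpa [Real.zero_rpow hq.ne', hq.ne'] using le_weakNorm 𝕜 x hq (φ := 0) (by simp)

lemma norm_sum_smul_le_weakNorm_one (x : Fin n → E) {c : Fin n → 𝕜} (hc : ∀ k, ‖c k‖ ≤ 1) :
    ‖∑ k, c k • x k‖ ≤ weakNorm 𝕜 x 1 := by
  obtain ⟨φ, hφ, hφx⟩ := exists_dual_vector'' 𝕜 (∑ k, c k • x k)
  calc ‖∑ k, c k • x k‖ = ‖φ (∑ k, c k • x k)‖ := by simp [hφx]
    _ ≤ ∑ k, ‖c k‖ * ‖φ (x k)‖ := by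
        rw [map_sum]
        exact (norm_sum_le _ _).trans_eq (by simp)
    _ ≤ ∑ k, ‖φ (x k)‖ := by gcongr with k; exact mul_le_of_le_one_left (norm_nonneg _) (hc k)
    _ ≤ weakNorm 𝕜 x 1 := by simpa using le_weakNorm 𝕜 x one_pos hφ

lemma weakNorm_one_smul_le (x : Fin n → E) {σ : Fin n → ℝ} (hσ : ∀ k, 0 ≤ σ k) {s p : ℝ}
    (hsp : s.HolderConjugate p) (hσp : ∑ k, σ k ^ p ≤ 1) :
    weakNorm 𝕜 (fun k => (σ k : 𝕜) • x k) 1 ≤ weakNorm 𝕜 x s := by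
  refine csSup_le ⟨_, 0, by simp, rfl⟩ ?_
  rintro _ ⟨φ, hφ, rfl⟩
  calc (∑ k, ‖φ ((σ k : 𝕜) • x k)‖ ^ (1 : ℝ)) ^ (1 / (1 : ℝ)) = ∑ k, σ k * ‖φ (x k)‖ := by
        simp [abs_of_nonneg (hσ _)]
    _ ≤ (∑ k, σ k ^ p) ^ (1 / p) * (∑ k, ‖φ (x k)‖ ^ s) ^ (1 / s) :=
        Real.inner_le_Lp_mul_Lq_of_nonneg _ hsp.symm (fun k _ => hσ k) (fun k _ => norm_nonneg _)
    _ ≤ 1 * weakNorm 𝕜 x s :=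
        mul_le_mul (Real.rpow_le_one (Finset.sum_nonneg fun k _ => Real.rpow_nonneg (hσ k) _) hσp
          (one_div_nonneg.2 hsp.symm.pos.le)) (le_weakNorm 𝕜 x hsp.pos hφ) (by positivity)
          zero_le_one
    _ = weakNorm 𝕜 x s := one_mul _

end WeakNorm

/-- Indexed from `0`: `rademacher k` is the Rademacher function `r_{k+1}`, matching `HasCotype`. -/
noncomputable def rademacher (k : ℕ) (u : ℝ) : ℝ :=
  Real.sign (Real.sin (2 ^ (k + 1) * Real.pi * u))

lemma Real.measurable_sign : Measurable Real.sign :=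
  Measurable.ite (measurableSet_lt measurable_id measurable_const) measurable_const <|
    Measurable.ite (measurableSet_lt measurable_const measurable_id) measurable_const
      measurable_const

lemma measurable_rademacher (k : ℕ) : Measurable (rademacher k) :=
  Real.measurable_sign.comp (Real.continuous_sin.measurable.comp (measurable_id.const_mul _))

lemma abs_rademacher_le_one (k : ℕ) (u : ℝ) : |rademacher k u| ≤ 1 := by
  rcases Real.sign_apply_eq (Real.sin (2 ^ (k + 1) * Real.pi * u)) with h | h | h <;>
    simp [rademacher, h]

section Rademacher

variable {F : Type*} [NormedAddCommGroup F] [NormedSpace ℝ F] {n : ℕ}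

lemma memLp_sum_rademacher_smul (y : Fin n → F) (p : ENNReal) (μ : Measure ℝ) [IsFiniteMeasure μ] :
    MemLp (fun u => ∑ k : Fin n, rademacher k u • y k) p μ := by
  refine MemLp.of_bound ?_ (∑ k, ‖y k‖) (ae_of_all _ fun u => ?_)
  · exact (Finset.stronglyMeasurable_fun_sum _ fun (k : Fin n) _ =>
      (measurable_rademacher k).stronglyMeasurable.smul_const (y k)).aestronglyMeasurable
  · refine (norm_sum_le _ _).trans (Finset.sum_le_sum fun k _ => ?_)
    rw [norm_smul, Real.norm_eq_abs]
    exact mul_le_of_le_one_left (norm_nonneg _) (abs_rademacher_le_one k u)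

lemma intervalIntegrable_norm_sum_rademacher_smul_rpow (y : Fin n → F) {r : ℝ} (hr : 0 < r) :
    IntervalIntegrable (fun u => ‖∑ k : Fin n, rademacher k u • y k‖ ^ r) volume 0 1 := by
  rw [intervalIntegrable_iff_integrableOn_Ioc_of_le zero_le_one]
  simpa [IntegrableOn, hr.le] using
    (memLp_sum_rademacher_smul y (ENNReal.ofReal r) _).integrable_norm_rpow'

lemma HasCotype.exists_sum_norm_rpow_le {r : ℝ} (h : HasCotype F r) (hr : 2 ≤ r) :
    ∃ K, 0 ≤ K ∧ ∀ (n : ℕ) (y : Fin n → F),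
      ∑ k, ‖y k‖ ^ r ≤ K ^ r * ∫ u in (0 : ℝ)..1, ‖∑ k : Fin n, rademacher k u • y k‖ ^ r := by
  obtain ⟨K, hK0, hK⟩ := h
  refine ⟨K, hK0, fun n y => ?_⟩
  have hr0 : 0 < r := by linarith
  have : IsProbabilityMeasure (volume.restrict (Set.Ioc (0 : ℝ) 1)) := ⟨by simp⟩
  have hL2_le_Lr :
      (∫ u in (0 : ℝ)..1, ‖∑ k : Fin n, rademacher k u • y k‖ ^ (2 : ℝ)) ^ ((1 : ℝ) / 2)
        ≤ (∫ u in (0 : ℝ)..1, ‖∑ k : Fin n, rademacher k u • y k‖ ^ r) ^ (1 / r) := by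
    simp only [intervalIntegral.integral_of_le zero_le_one]
    exact integral_norm_rpow_one_div_le_of_exponent_le two_pos hr (memLp_sum_rademacher_smul y _ _)
  have hI : 0 ≤ ∫ u in (0 : ℝ)..1, ‖∑ k : Fin n, rademacher k u • y k‖ ^ r :=
    intervalIntegral.integral_nonneg zero_le_one fun u _ => by positivity
  have h := (hK n y).trans (mul_le_mul_of_nonneg_left hL2_le_Lr hK0)
  rwa [one_div, Real.rpow_inv_le_iff_of_pos (by positivity) (by positivity) hr0,
    Real.mul_rpow hK0 (by positivity), Real.rpow_inv_rpow hI hr0.ne'] at h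

end Rademacher

lemma ContinuousMultilinearMap.norm_map_ofReal_smul_of_nonneg {𝕜 ι : Type*} [RCLike 𝕜]
    [Fintype ι] [DecidableEq ι] {E : ι → Type*} [∀ i, NormedAddCommGroup (E i)]
    [∀ i, NormedSpace 𝕜 (E i)] {F : Type*} [NormedAddCommGroup F] [NormedSpace 𝕜 F]
    (T : ContinuousMultilinearMap 𝕜 E F) {c : ι → ℝ} (hc : ∀ i, 0 ≤ c i) (v : ∀ i, E i) :
    ‖T (fun i => (c i : 𝕜) • v i)‖ = (∏ i, c i) * ‖T v‖ := by
  simp [T.map_smul_univ, norm_smul, norm_prod, abs_of_nonneg (hc _)]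

section MultipleSummingWith

variable {𝕜 : Type*} [RCLike 𝕜] {m : ℕ} {E : Fin m → Type*} [∀ i, NormedAddCommGroup (E i)]
  [∀ i, NormedSpace 𝕜 (E i)] {F : Type*} [NormedAddCommGroup F] [NormedSpace 𝕜 F]

def MultipleSummingWith (t s C : ℝ) (T : ContinuousMultilinearMap 𝕜 E F) : Prop :=
  ∀ (n : ℕ) (x : ∀ i, Fin n → E i),
    (∑ k : Fin m → Fin n, ‖T (fun i => x i (k i))‖ ^ t) ^ (1 / t) ≤ C * ∏ i, weakNorm 𝕜 (x i) s

lemma multipleSummingWith_iff {t s C : ℝ} (ht : 0 < t) (hs : 0 < s) (hC : 0 ≤ C)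
    {T : ContinuousMultilinearMap 𝕜 E F} :
    MultipleSummingWith t s C T ↔ ∀ (n : ℕ) (x : ∀ i, Fin n → E i),
      ∑ k : Fin m → Fin n, ‖T (fun i => x i (k i))‖ ^ t ≤ (C * ∏ i, weakNorm 𝕜 (x i) s) ^ t := by
  refine forall₂_congr fun n x => ?_
  rw [one_div, Real.rpow_inv_le_iff_of_pos (Finset.sum_nonneg fun k _ => by positivity)
    (mul_nonneg hC (Finset.prod_nonneg fun i _ => weakNorm_nonneg 𝕜 _ hs)) ht]

lemma MultipleSummingWith.mono_exponent {p q s C : ℝ} {T : ContinuousMultilinearMap 𝕜 E F}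
    (h : MultipleSummingWith p s C T) (hp : 0 < p) (hpq : p ≤ q) : MultipleSummingWith q s C T :=
  fun n x => (sum_rpow_one_div_le_of_exponent_le (fun _ => norm_nonneg _) hp hpq).trans (h n x)

lemma MultipleSummingWith.of_one {r s p t C : ℝ} {T : ContinuousMultilinearMap 𝕜 E F}
    (h : MultipleSummingWith r 1 C T) (hC : 0 ≤ C) (hr : 0 < r) (hsp : s.HolderConjugate p)
    (ht : 0 < t) (hrt : 1 / t = 1 / r - m / p) : MultipleSummingWith t s C T := by
  intro n x
  have hp : 0 < p := hsp.symm.pos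
  set b : (Fin m → Fin n) → ℝ := fun k => ‖T (fun i => x i (k i))‖ ^ t
  have hb : ∀ k, 0 ≤ b k := fun _ => by positivity
  set S := ∑ k, b k
  have hS : 0 ≤ S := Finset.sum_nonneg fun k _ => hb k
  have hMS : ∀ i j, 0 ≤ marginal b i j / S := fun i j => div_nonneg (marginal_nonneg hb i j) hS
  let σ : Fin m → Fin n → ℝ := fun i j => (marginal b i j / S) ^ (1 / p)
  have hσ : ∀ i j, 0 ≤ σ i j := fun i j => Real.rpow_nonneg (hMS i j) _
  let y : ∀ i, Fin n → E i := fun i j => (σ i j : 𝕜) • x i j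
  have hy : ∀ i, weakNorm 𝕜 (y i) 1 ≤ weakNorm 𝕜 (x i) s := fun i =>
    weakNorm_one_smul_le 𝕜 (x i) (hσ i) hsp <| by
      simp only [σ, one_div, Real.rpow_inv_rpow (hMS i _) hp.ne', ← Finset.sum_div, sum_marginal]
      exact div_self_le_one S
  have hTy : ∀ k : Fin m → Fin n, ‖T (fun i => y i (k i))‖ ^ r
      = (∏ i, (marginal b i (k i) / S) ^ (r / p)) * b k ^ (r / t) := by
    intro k
    rw [T.norm_map_ofReal_smul_of_nonneg (fun i => hσ i (k i)),
      Real.mul_rpow (Finset.prod_nonneg fun i _ => hσ i (k i)) (norm_nonneg _),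
      ← Real.finsetProd_rpow _ _ fun i _ => hσ i (k i)]
    congr 1
    · refine Finset.prod_congr rfl fun i _ => ?_
      rw [← Real.rpow_mul (hMS _ _), one_div_mul_eq_div]
    · rw [← Real.rpow_mul (norm_nonneg _), mul_div_cancel₀ r ht.ne']
  have hec : Fintype.card (Fin m) * (r / p) + r / t = 1 := by
    have hp : p ≠ 0 := hp.ne'
    rw [Fintype.card_fin, div_eq_mul_one_div r t, hrt]
    field_simp
    ring
  have hkey : S ^ (r / t) ≤ (C * ∏ i, weakNorm 𝕜 (x i) s) ^ r :=
    calc S ^ (r / t) ≤ ∑ k, (∏ i, (marginal b i (k i) / S) ^ (r / p)) * b k ^ (r / t) :=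
          rpow_sum_le_sum_prod_marginal_rpow hb (div_nonneg hr.le hp.le)
            (div_pos hr ht) hec
      _ = ∑ k : Fin m → Fin n, ‖T (fun i => y i (k i))‖ ^ r := by simp only [hTy]
      _ ≤ (C * ∏ i, weakNorm 𝕜 (y i) 1) ^ r := (multipleSummingWith_iff hr one_pos hC).1 h n y
      _ ≤ (C * ∏ i, weakNorm 𝕜 (x i) s) ^ r := by
          gcongr
          · exact mul_nonneg hC (Finset.prod_nonneg fun i _ => weakNorm_nonneg 𝕜 _ one_pos)
          · exact fun i _ => weakNorm_nonneg 𝕜 _ one_pos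
          · exact hy _
  have hZ : 0 ≤ C * ∏ i, weakNorm 𝕜 (x i) s :=
    mul_nonneg hC (Finset.prod_nonneg fun i _ => weakNorm_nonneg 𝕜 _ hsp.pos)
  rwa [← Real.rpow_le_rpow_iff (by positivity) hZ hr, ← Real.rpow_mul hS, one_div_mul_eq_div]

end MultipleSummingWith

universe u

section Cotype

variable {𝕜 : Type*} [RCLike 𝕜] {F : Type*} [NormedAddCommGroup F] [NormedSpace 𝕜 F]
  [NormedSpace ℝ F] [IsScalarTower ℝ 𝕜 F]

lemma curryLeft_sum_rademacher_smul {m : ℕ} {E : Fin (m + 1) → Type*}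
    [∀ i, NormedAddCommGroup (E i)] [∀ i, NormedSpace 𝕜 (E i)] (T : ContinuousMultilinearMap 𝕜 E F)
    {n : ℕ} (x₀ : Fin n → E 0) (w : ∀ i : Fin m, E i.succ) (u : ℝ) :
    T.curryLeft (∑ j : Fin n, (rademacher j u : 𝕜) • x₀ j) w
      = ∑ j : Fin n, rademacher j u • T (Fin.cons (x₀ j) w) := by
  simp only [map_sum, map_smul, _root_.sum_apply, _root_.smul_apply, T.curryLeft_apply,
    RCLike.real_smul_eq_coe_smul (K := 𝕜)]

section

variable {r K : ℝ} (hK : ∀ (n : ℕ) (y : Fin n → F),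
  ∑ k, ‖y k‖ ^ r ≤ K ^ r * ∫ u in (0 : ℝ)..1, ‖∑ k : Fin n, rademacher k u • y k‖ ^ r)
include hK

lemma sum_norm_rpow_le_integral_curryLeft (hr : 0 < r) {m : ℕ} {E : Fin (m + 1) → Type*}
    [∀ i, NormedAddCommGroup (E i)] [∀ i, NormedSpace 𝕜 (E i)] (T : ContinuousMultilinearMap 𝕜 E F)
    {n : ℕ} (x : ∀ i, Fin n → E i) :
    ∑ k : Fin (m + 1) → Fin n, ‖T (fun i => x i (k i))‖ ^ r
      ≤ K ^ r * ∫ u in (0 : ℝ)..1, ∑ k' : Fin m → Fin n,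
        ‖T.curryLeft (∑ j : Fin n, (rademacher j u : 𝕜) • x 0 j) (fun i => x i.succ (k' i))‖
          ^ r := by
  rw [Fintype.sum_pi_fin_succ_comp (fun v => ‖T v‖ ^ r) x,
    intervalIntegral.integral_finsetSum fun k' _ => ?_, Finset.mul_sum]
  · gcongr with k'
    simpa only [curryLeft_sum_rademacher_smul] using hK n _
  · simpa only [curryLeft_sum_rademacher_smul] using
      intervalIntegrable_norm_sum_rademacher_smul_rpow _ hr

lemma sum_norm_rpow_le_of_rademacher_cotype (hr : 0 < r) (hK0 : 0 ≤ K)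
    {m : ℕ} {E : Fin m → Type u} [∀ i, NormedAddCommGroup (E i)] [∀ i, NormedSpace 𝕜 (E i)]
    (T : ContinuousMultilinearMap 𝕜 E F) {n : ℕ} (x : ∀ i, Fin n → E i) :
    ∑ k : Fin m → Fin n, ‖T (fun i => x i (k i))‖ ^ r
      ≤ (K ^ m * ‖T‖ * ∏ i, weakNorm 𝕜 (x i) 1) ^ r := by
  induction m with
  | zero =>
    simp only [Finset.univ_unique, Finset.sum_singleton, pow_zero, one_mul,
      Finset.univ_eq_empty, Finset.prod_empty, mul_one]
    gcongr
    simpa using T.le_opNorm _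
  | succ m ih =>
    let z : ℝ → E 0 := fun u => ∑ j : Fin n, (rademacher j u : 𝕜) • x 0 j
    have hw₀ : 0 ≤ weakNorm 𝕜 (x 0) 1 := weakNorm_nonneg 𝕜 _ one_pos
    have hW : 0 ≤ ∏ i : Fin m, weakNorm 𝕜 (x i.succ) 1 :=
      Finset.prod_nonneg fun i _ => weakNorm_nonneg 𝕜 _ one_pos
    have hz : ∀ u, ‖T.curryLeft (z u)‖ ≤ ‖T‖ * weakNorm 𝕜 (x 0) 1 := fun u => by
      refine (T.curryLeft.le_opNorm _).trans ?_
      rw [T.curryLeft_norm]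
      gcongr
      exact norm_sum_smul_le_weakNorm_one 𝕜 _ fun j => by simpa using abs_rademacher_le_one j u
    have hpoint : ∀ u, ∑ k' : Fin m → Fin n, ‖T.curryLeft (z u) (fun i => x i.succ (k' i))‖ ^ r
        ≤ (K ^ m * (‖T‖ * weakNorm 𝕜 (x 0) 1) * ∏ i : Fin m, weakNorm 𝕜 (x i.succ) 1) ^ r :=
      fun u => (ih (T.curryLeft (z u)) (fun i => x i.succ)).trans <|
        Real.rpow_le_rpow (by positivity) (by gcongr; exact hz u) hr.le
    calc ∑ k : Fin (m + 1) → Fin n, ‖T (fun i => x i (k i))‖ ^ r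
        ≤ K ^ r * ∫ u in (0 : ℝ)..1,
            ∑ k' : Fin m → Fin n, ‖T.curryLeft (z u) (fun i => x i.succ (k' i))‖ ^ r :=
          sum_norm_rpow_le_integral_curryLeft hK hr T x
      _ ≤ K ^ r *
            (K ^ m * (‖T‖ * weakNorm 𝕜 (x 0) 1) * ∏ i : Fin m, weakNorm 𝕜 (x i.succ) 1) ^ r := by
          gcongr
          simpa using (Real.le_norm_self _).trans
            (intervalIntegral.norm_integral_le_of_norm_le_const (a := 0) (b := 1) fun u _ =>
              (Real.norm_of_nonneg (by positivity)).trans_le (hpoint u))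
      _ = (K ^ (m + 1) * ‖T‖ * ∏ i, weakNorm 𝕜 (x i) 1) ^ r := by
          rw [← Real.mul_rpow hK0 (by positivity), Fin.prod_univ_succ]
          congr 1
          ring

end

variable (𝕜) in
lemma HasCotype.exists_multipleSummingWith {r : ℝ} (h : HasCotype F r) (hr : 2 ≤ r) :
    ∃ K, 0 ≤ K ∧ ∀ {m : ℕ} {E : Fin m → Type u} [∀ i, NormedAddCommGroup (E i)]
      [∀ i, NormedSpace 𝕜 (E i)] (T : ContinuousMultilinearMap 𝕜 E F),
      MultipleSummingWith r 1 (K ^ m * ‖T‖) T := by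
  obtain ⟨K, hK0, hK⟩ := h.exists_sum_norm_rpow_le hr
  have hr0 : 0 < r := by linarith
  exact ⟨K, hK0, fun T => (multipleSummingWith_iff hr0 one_pos (by positivity)).2 fun _ x =>
    sum_norm_rpow_le_of_rademacher_cotype hK hr0 hK0 T x⟩

end Cotype

theorem stmt8_general {𝕜 : Type*} [RCLike 𝕜] {m : ℕ}
    {E : Fin m → Type*} [∀ i, NormedAddCommGroup (E i)] [∀ i, NormedSpace 𝕜 (E i)]
    {F : Type*} [NormedAddCommGroup F] [NormedSpace 𝕜 F] [NormedSpace ℝ F]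
    [IsScalarTower ℝ 𝕜 F]
    {r s t : ℝ} (hr2 : 2 ≤ r) (hcot : HasCotype F r)
    (hs1 : 1 ≤ s)
    -- `m < s / (r (s-1))`, written so that it is vacuously true when `s = 1`
    (hms : (m : ℝ) * (r * (s - 1)) < s)
    (ht : s * r / (s - m * s * r + m * r) ≤ t)
    (T : ContinuousMultilinearMap 𝕜 E F) :
    ∃ C : ℝ, 0 ≤ C ∧ ∀ (n : ℕ), 0 < n → ∀ x : ∀ i, Fin n → E i,
      (∑ k : Fin m → Fin n, ‖T (fun i => x i (k i))‖ ^ t) ^ (1 / t)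
        ≤ C * ∏ i, weakNorm 𝕜 (x i) s := by
  have hr : 0 < r := by linarith
  have hD : 0 < s - m * s * r + m * r := by nlinarith
  obtain ⟨K, hK, hT⟩ := hcot.exists_multipleSummingWith 𝕜 hr2
  have ht₀ : 0 < s * r / (s - m * s * r + m * r) := by positivity
  have hsumming : MultipleSummingWith (s * r / (s - m * s * r + m * r)) s (K ^ m * ‖T‖) T := by
    rcases hs1.eq_or_lt with rfl | hs1
    · convert hT T using 1
      simp
    · refine (hT T).of_one (by positivity) hr (Real.HolderConjugate.conjExponent hs1) ht₀ ?_
      have : s - 1 ≠ 0 := by linarith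
      rw [Real.conjExponent]
      field_simp
      ring
  exact ⟨K ^ m * ‖T‖, by positivity, fun n _ x => hsumming.mono_exponent ht₀ ht n x⟩

theorem stmt8 {𝕜 : Type*} [RCLike 𝕜] {m : ℕ} (hm : 1 ≤ m)
    {E : Fin m → Type*} [∀ i, NormedAddCommGroup (E i)] [∀ i, NormedSpace 𝕜 (E i)]
    [∀ i, CompleteSpace (E i)]
    {F : Type*} [NormedAddCommGroup F] [NormedSpace 𝕜 F] [NormedSpace ℝ F]
    [IsScalarTower ℝ 𝕜 F] [CompleteSpace F]
    {r s t : ℝ} (hr2 : 2 ≤ r) (hcot : HasCotype F r)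
    (hs1 : 1 ≤ s) (hs2 : s < 2)
    -- `m < s / (r (s-1))`, written so that it is vacuously true when `s = 1`
    (hms : (m : ℝ) * (r * (s - 1)) < s)
    (ht : s * r / (s - m * s * r + m * r) ≤ t)
    (T : ContinuousMultilinearMap 𝕜 E F) :
    ∃ C : ℝ, 0 ≤ C ∧ ∀ (n : ℕ), 0 < n → ∀ x : ∀ i, Fin n → E i,
      (∑ k : Fin m → Fin n, ‖T (fun i => x i (k i))‖ ^ t) ^ (1 / t)
        ≤ C * ∏ i, weakNorm 𝕜 (x i) s :=
  stmt8_general hr2 hcot hs1 hms ht T
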